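/- For every even integer t ≥ 4 and all positive integers a, b, c with a ≥ 2 and a + b = t − 1, the multiset {1^a, 2^b, t^c} (a copies of 1, b copies of 2, c copies of t) admits a linear realization, i.e., there is a permutation of {0,…,a+b+c} whose multiset of consecutive absolute differences equals {1^a, 2^b, t^c}. -/

import Mathlib

/-- Multiset of absolute differences of consecutive entries of a list. -/
def pathDiffs (l : List ℕ) : Multiset ℕ :=
  ↑(List.zipWith (fun x y => max x y - min x y) l l.tail)

/-- `l` is a linear realization of the multiset `L`: a permutation of
`{0, …, |L|}` whose multiset of consecutive absolute differences is `L`. -/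
def IsLinReal (L : Multiset ℕ) (l : List ℕ) : Prop :=
  l.Perm (List.range (Multiset.card L + 1)) ∧ pathDiffs l = L

/-- The cyclic edge-length `ℓ(x,y) = min(|x−y|, v−|x−y|)` in `K_v`. -/
def cycLen (v x y : ℕ) : ℕ := min (max x y - min x y) (v - (max x y - min x y))

def cycDiffs (v : ℕ) (l : List ℕ) : Multiset ℕ :=
  ↑(List.zipWith (cycLen v) l l.tail)

/-- `l` is a cyclic realization of `L`: a Hamiltonian path of `K_v` on
`{0, …, v−1}` (with `v = |L|+1`) whose multiset of cyclic edge-lengths is `L`. -/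
def IsCycReal (L : Multiset ℕ) (l : List ℕ) : Prop :=
  l.Perm (List.range (Multiset.card L + 1)) ∧
    cycDiffs (Multiset.card L + 1) l = L

/-- Vertices `a` and `b` are adjacent (consecutive, in either order) in the path `l`. -/
def AdjIn (a b : ℕ) (l : List ℕ) : Prop :=
  [a, b] <:+: l ∨ [b, a] <:+: l

/-- The endpoints of the path `l` are `0` and `1`. -/
def Ends01 (l : List ℕ) : Prop :=
  (l.head? = some 0 ∧ l.getLast? = some 1) ∨
    (l.head? = some 1 ∧ l.getLast? = some 0)

/-!
Write `c = q t + s` with `s < t` and arrange `0, …, t (q + 1) + s - 1` in the `t` columns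
`r, r + t, r + 2t, …` (`r < t`); column `r` has `q + 2` entries if `r < s` and `q + 1` otherwise.
A boustrophedon traversal of the columns, in the order of a Hamiltonian path `σ` of `{0, …, t - 1}`
with steps `{1^a, 2^b}`, uses exactly `c` vertical steps of length `t`, and each passage between two
columns of equal height has the length of the corresponding step of `σ`. Heights differ only
between tall and short columns, so `σ` visits the `s` tall columns first and leaves them from
column `s - 1`; snaking the tall block backwards from there puts that passage in the bottom row.
Such a `σ` is glued from two paths of the shape `0, 1, …, j, j + 2, j + 4, …, j + 3, j + 1`
or their mirror images.
-/

open List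

@[simp]
theorem pathDiffs_nil : pathDiffs [] = 0 := rfl

@[simp]
theorem pathDiffs_singleton (x : ℕ) : pathDiffs [x] = 0 := rfl

theorem pathDiffs_cons_cons (x y : ℕ) (l : List ℕ) :
    pathDiffs (x :: y :: l) = (max x y - min x y) ::ₘ pathDiffs (y :: l) := rfl

theorem pathDiffs_append : ∀ l₁ l₂ : List ℕ,
    pathDiffs (l₁ ++ l₂) =
      pathDiffs l₁ + pathDiffs (l₁.getLast?.toList ++ l₂.head?.toList) + pathDiffs l₂
  | [], l₂ => by cases l₂ <;> simp
  | [x], [] => by simp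
  | [x], y :: l₂ => by simp [pathDiffs_cons_cons]
  | x :: x' :: l₁, l₂ => by
    rw [cons_append, cons_append, pathDiffs_cons_cons, ← cons_append, pathDiffs_append,
      getLast?_cons_cons, pathDiffs_cons_cons, Multiset.cons_add, Multiset.cons_add]
theorem pathDiffs_append_of_getLast?_head? {l₁ l₂ : List ℕ} {x y : ℕ}
    (h₁ : l₁.getLast? = some x) (h₂ : l₂.head? = some y) :
    pathDiffs (l₁ ++ l₂) = pathDiffs l₁ + {max x y - min x y} + pathDiffs l₂ := by
  rw [pathDiffs_append, h₁, h₂]; rfl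

theorem pathDiffs_reverse : ∀ l : List ℕ, pathDiffs l.reverse = pathDiffs l
  | [] => rfl
  | x :: l => by
    cases l with
    | nil => rfl
    | cons y l =>
      rw [reverse_cons, pathDiffs_append, pathDiffs_reverse, getLast?_reverse]
      simp only [head?_cons, Option.toList_some, singleton_append, pathDiffs_cons_cons,
        pathDiffs_singleton]
      rw [add_zero, Multiset.cons_zero, add_comm, Multiset.singleton_add, max_comm, min_comm]

theorem pathDiffs_map (f : ℕ → ℕ) : ∀ l : List ℕ,
    (∀ x ∈ l, ∀ y ∈ l, max (f x) (f y) - min (f x) (f y) = max x y - min x y) →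
      pathDiffs (l.map f) = pathDiffs l
  | [], _ => rfl
  | [_], _ => rfl
  | x :: y :: l, hf => by
    rw [map_cons, map_cons, pathDiffs_cons_cons, ← map_cons, pathDiffs_map f (y :: l),
      hf x (by simp) y (by simp), pathDiffs_cons_cons]
    exact fun u hu v hv => hf u (mem_cons_of_mem _ hu) v (mem_cons_of_mem _ hv)

theorem pathDiffs_map_add_left (s : ℕ) (l : List ℕ) :
    pathDiffs (l.map (s + ·)) = pathDiffs l :=
  pathDiffs_map _ l fun x _ y _ => by omega

theorem pathDiffs_range' (s step : ℕ) : ∀ n, pathDiffs (range' s n step) = .replicate (n - 1) step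
  | 0 => rfl
  | 1 => rfl
  | n + 2 => by
    rw [range'_succ, range'_succ, pathDiffs_cons_cons, ← range'_succ, pathDiffs_range']
    simp [Multiset.replicate_succ]

/-- `zigzag k = [0, 2, 4, …, 5, 3, 1]`, a path through `{0, …, k + 1}` with `k` steps of length 2
and one step of length 1. -/
def zigzag : ℕ → List ℕ
  | 0 => [0, 1]
  | k + 1 => 0 :: (zigzag k).reverse.map (· + 1)

theorem zero_cons_map_succ_perm_range {l : List ℕ} {n : ℕ} (h : l ~ range n) :
    (0 :: l.map (· + 1)) ~ range (n + 1) := by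
  rw [range_succ_eq_map]
  exact (h.map _).cons 0

theorem pathDiffs_zero_cons_map_succ {l : List ℕ} {y : ℕ} (h : l.head? = some y) :
    pathDiffs (0 :: l.map (· + 1)) = (y + 1) ::ₘ pathDiffs l := by
  cases l with
  | nil => simp at h
  | cons z l =>
    obtain rfl : z = y := by simpa using h
    rw [map_cons, pathDiffs_cons_cons, ← map_cons (f := (· + 1)) (a := z) (l := l),
      pathDiffs_map _ _ fun _ _ _ _ => by omega]
    simp

theorem zigzag_perm : ∀ k : ℕ, zigzag k ~ range (k + 2)
  | 0 => .refl _
  | k + 1 => zero_cons_map_succ_perm_range ((reverse_perm _).trans (zigzag_perm k))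

theorem zigzag_head? (k : ℕ) : (zigzag k).head? = some 0 := by
  cases k <;> rfl

theorem zigzag_getLast? : ∀ k : ℕ, (zigzag k).getLast? = some 1
  | 0 => rfl
  | k + 1 => by
    rw [zigzag, getLast?_cons, getLast?_map, getLast?_reverse, zigzag_head?]
    rfl

theorem pathDiffs_zigzag : ∀ k : ℕ, pathDiffs (zigzag k) = {1} + .replicate k 2
  | 0 => rfl
  | k + 1 => by
    rw [zigzag, pathDiffs_zero_cons_map_succ (by rw [head?_reverse, zigzag_getLast?]),
      pathDiffs_reverse, pathDiffs_zigzag, Multiset.replicate_succ, Multiset.add_cons]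

theorem exists_zigzag_path (j k : ℕ) :
    ∃ P : List ℕ, P ~ range (j + k + 2) ∧ P.head? = some 0 ∧ P.getLast? = some (j + 1) ∧
      pathDiffs P = .replicate (j + 1) 1 + .replicate k 2 := by
  induction j with
  | zero =>
    exact ⟨zigzag k, by simpa using zigzag_perm k, zigzag_head? k, zigzag_getLast? k,
      pathDiffs_zigzag k⟩
  | succ j ih =>
    obtain ⟨P, hperm, hhead, hlast, hdiffs⟩ := ih
    refine ⟨0 :: P.map (· + 1), ?_, rfl, ?_, ?_⟩
    · rw [show j + 1 + k + 2 = j + k + 2 + 1 by omega]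
      exact zero_cons_map_succ_perm_range hperm
    · rw [getLast?_cons, getLast?_map, hlast]; rfl
    · rw [pathDiffs_zero_cons_map_succ hhead, hdiffs, Multiset.replicate_succ _ (j + 1),
        Multiset.cons_add]

theorem exists_path_from_zero {m i k : ℕ} (hm : i + k + 1 = m) (hik : k = 0 ∨ 1 ≤ i) :
    ∃ P : List ℕ, P ~ range m ∧ P.head? = some 0 ∧ P.getLast? = some i ∧
      pathDiffs P = .replicate i 1 + .replicate k 2 := by
  subst hm
  rcases Nat.eq_zero_or_pos i with rfl | hi
  · obtain rfl : k = 0 := by omega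
    exact ⟨[0], .refl _, rfl, rfl, rfl⟩
  · obtain ⟨j, rfl⟩ : ∃ j, i = j + 1 := ⟨i - 1, by omega⟩
    rw [show j + 1 + k + 1 = j + k + 2 by omega]
    exact exists_zigzag_path j k

theorem exists_path_to_top {m i k : ℕ} (hm : i + k + 1 = m) (hik : k = 0 ∨ 1 ≤ i) :
    ∃ P : List ℕ, P ~ range m ∧ P.getLast? = some (m - 1) ∧
      pathDiffs P = .replicate i 1 + .replicate k 2 := by
  obtain ⟨P, hperm, hhead, -, hdiffs⟩ := exists_path_from_zero hm hik
  have hlt : ∀ x ∈ P, x < m := fun x hx => mem_range.1 (hperm.subset hx)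
  refine ⟨(P.map (m - 1 - ·)).reverse, ?_, ?_, ?_⟩
  · have hrev : (range m).map (m - 1 - ·) = (range m).reverse := by
      rw [range_eq_range', reverse_range', ← range_eq_range']; simp
    exact (reverse_perm _).trans ((hperm.map _).trans (hrev ▸ reverse_perm _))
  · rw [getLast?_reverse, head?_map, hhead]; rfl
  · rw [pathDiffs_reverse, pathDiffs_map _ _ fun x hx y hy => ?_, hdiffs]
    have := hlt x hx; have := hlt y hy; omega

theorem map_add_left_perm_range' {P : List ℕ} {m : ℕ} (s : ℕ) (h : P ~ range m) :
    P.map (s + ·) ~ range' s m := by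
  rw [range'_eq_map_range]
  exact h.map _

theorem exists_split_path {t a b s : ℕ} (ha : 2 ≤ a) (hab : a + b + 1 = t) (hst : s < t) :
    ∃ seg₁ seg₂ : List ℕ, seg₁ ~ range s ∧ seg₂ ~ range' s (t - s) ∧
      pathDiffs (seg₁ ++ seg₂) = .replicate a 1 + .replicate b 2 := by
  rcases Nat.eq_zero_or_pos s with rfl | hs
  · obtain ⟨P, hperm, -, -, hdiffs⟩ := exists_path_from_zero hab (by omega)
    exact ⟨[], P, .refl _, by simpa [← range_eq_range'] using hperm, hdiffs⟩
  by_cases hjump : a = 2 ∧ 2 ≤ s ∧ s + 2 ≤ t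
  · -- with only two steps of length 1 available, the two blocks are joined by a step of length 2
    obtain ⟨rfl, hs2, hst2⟩ := hjump
    obtain ⟨k₁, k₂, rfl, hs₁, hs₂⟩ :
        ∃ k₁ k₂, b = k₁ + 1 + k₂ ∧ 1 + k₁ + 1 = s ∧ 1 + k₂ + 1 = t - s :=
      ⟨s - 2, t - s - 2, by omega, by omega, by omega⟩
    obtain ⟨P₁, hperm₁, hlast₁, hdiffs₁⟩ := exists_path_to_top hs₁ (by omega)
    obtain ⟨P₂, hperm₂, -, hlast₂, hdiffs₂⟩ := exists_path_from_zero hs₂ (by omega)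
    have hhead₂ : (P₂.map (s + ·)).reverse.head? = some (s + 1) := by simp [hlast₂]
    refine ⟨P₁, (P₂.map (s + ·)).reverse, hperm₁,
      (reverse_perm _).trans (map_add_left_perm_range' s hperm₂), ?_⟩
    rw [pathDiffs_append_of_getLast?_head? hlast₁ hhead₂, pathDiffs_reverse,
      pathDiffs_map_add_left, hdiffs₁, hdiffs₂,
      show max (s - 1) (s + 1) - min (s - 1) (s + 1) = 2 by omega]
    simp only [← Multiset.nsmul_singleton, add_nsmul, one_nsmul]
    abel
  · obtain ⟨i₁, k₁, i₂, k₂, rfl, rfl, hs₁, hs₂, hik₁, hik₂⟩ : ∃ i₁ k₁ i₂ k₂,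
        a = i₁ + 1 + i₂ ∧ b = k₁ + k₂ ∧ i₁ + k₁ + 1 = s ∧ i₂ + k₂ + 1 = t - s ∧
          (k₁ = 0 ∨ 1 ≤ i₁) ∧ (k₂ = 0 ∨ 1 ≤ i₂) :=
      ⟨s - 1 - min b (s - 2), min b (s - 2), t - s - 1 - (b - min b (s - 2)), b - min b (s - 2),
        by omega, by omega, by omega, by omega, by omega, by omega⟩
    obtain ⟨P₁, hperm₁, hlast₁, hdiffs₁⟩ := exists_path_to_top hs₁ hik₁
    obtain ⟨P₂, hperm₂, hhead₂, -, hdiffs₂⟩ := exists_path_from_zero hs₂ hik₂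
    have hhead₂' : (P₂.map (s + ·)).head? = some s := by simp [hhead₂]
    refine ⟨P₁, P₂.map (s + ·), hperm₁, map_add_left_perm_range' s hperm₂, ?_⟩
    rw [pathDiffs_append_of_getLast?_head? hlast₁ hhead₂', pathDiffs_map_add_left, hdiffs₁,
      hdiffs₂, show max (s - 1) s - min (s - 1) s = 1 by omega]
    simp only [← Multiset.nsmul_singleton, add_nsmul, one_nsmul]
    abel

def column (t h r : ℕ) (up : Bool) : List ℕ :=
  if up then range' r h t else (range' r h t).reverse

def snake (t h : ℕ) : Bool → List ℕ → List ℕ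
  | _, [] => []
  | up, r :: ρ => column t h r up ++ snake t h (!up) ρ

section Snake

variable {t h : ℕ}

theorem mem_column {r x : ℕ} (up : Bool) : x ∈ column t h r up ↔ x ∈ range' r h t := by
  cases up <;> simp [column]

theorem length_column (r : ℕ) (up : Bool) : (column t h r up).length = h := by
  cases up <;> simp [column]

theorem head?_column (r : ℕ) (up : Bool) :
    (column t (h + 1) r up).head? = some (if up then r else r + t * h) := by
  cases up
  · simp [column, range'_concat]
  · simp [column, range'_succ]

theorem getLast?_column (r : ℕ) (up : Bool) :
    (column t (h + 1) r up).getLast? = some (if up then r + t * h else r) := by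
  cases up
  · simp [column, range'_succ]
  · simp [column, range'_concat]

theorem pathDiffs_column (r : ℕ) (up : Bool) :
    pathDiffs (column t (h + 1) r up) = .replicate h t := by
  cases up <;> simp [column, pathDiffs_reverse, pathDiffs_range']

theorem mem_snake {x : ℕ} : ∀ {up : Bool} {ρ : List ℕ},
    x ∈ snake t h up ρ ↔ ∃ r ∈ ρ, x ∈ range' r h t
  | _, [] => by simp [snake]
  | _, r :: ρ => by simp [snake, mem_column, mem_snake]

theorem length_snake : ∀ (up : Bool) (ρ : List ℕ), (snake t h up ρ).length = ρ.length * h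
  | _, [] => by simp [snake]
  | _, r :: ρ => by simp [snake, length_column, length_snake, Nat.succ_mul, Nat.add_comm]

theorem head?_snake_true (ρ : List ℕ) : (snake t (h + 1) true ρ).head? = ρ.head? := by
  cases ρ with
  | nil => rfl
  | cons r ρ => simp [snake, head?_column]

theorem pathDiffs_snake : ∀ (up : Bool) (ρ : List ℕ),
    pathDiffs (snake t (h + 1) up ρ) = .replicate (ρ.length * h) t + pathDiffs ρ
  | _, [] => by simp [snake]
  | _, [r] => by simp [snake, pathDiffs_column]
  | up, r :: r' :: ρ => by
    have hhead : (snake t (h + 1) (!up) (r' :: ρ)).head? =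
        some (if !up then r' else r' + t * h) := by
      simp only [snake, head?_append, head?_column, Option.some_or]
    have hjoin : max (if up then r + t * h else r) (if !up then r' else r' + t * h) -
        min (if up then r + t * h else r) (if !up then r' else r' + t * h) =
          max r r' - min r r' := by
      cases up
      · simp
      · simp; omega
    rw [snake, pathDiffs_append_of_getLast?_head? (getLast?_column _ _) hhead, pathDiffs_snake,
      pathDiffs_column, hjoin, pathDiffs_cons_cons r r' ρ]
    simp only [length_cons, Nat.succ_mul (ρ.length + 1), Multiset.replicate_add,
      ← Multiset.singleton_add]
    abel

end Snake

theorem perm_range_of_forall_mem {l : List ℕ} {n : ℕ} (hlen : l.length ≤ n)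
    (hmem : ∀ x < n, x ∈ l) : l ~ range n :=
  (nodup_range.subperm fun x hx => hmem x (mem_range.1 hx)).perm_of_length_le
    (by simpa using hlen) |>.symm

theorem exists_perm_pathDiffs_of_split {t s : ℕ} (q : ℕ) {seg₁ seg₂ : List ℕ} (hst : s ≤ t)
    (h₁ : seg₁ ~ range s) (h₂ : seg₂ ~ range' s (t - s)) :
    ∃ L : List ℕ, L ~ range (t * (q + 1) + s) ∧
      pathDiffs L = .replicate (t * q + s) t + pathDiffs (seg₁ ++ seg₂) := by
  refine ⟨(snake t (q + 1 + 1) true seg₁.reverse).reverse ++ snake t (q + 1) true seg₂, ?_, ?_⟩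
  · apply perm_range_of_forall_mem
    · have hcount : s * (q + 1 + 1) + (t - s) * (q + 1) = t * (q + 1) + s := by
        zify [hst]; ring
      simp [length_snake, h₁.length_eq, h₂.length_eq, hcount]
    intro x hx
    have hdiv := Nat.mod_add_div x t
    have hmod : x % t < t := Nat.mod_lt x (Nat.pos_of_ne_zero (by rintro rfl; omega))
    simp only [mem_append, mem_reverse, mem_snake, mem_range']
    by_cases hr : x % t < s
    · refine .inl ⟨x % t, h₁.mem_iff.2 (mem_range.2 hr), x / t, ?_, hdiv.symm⟩
      exact Nat.div_lt_of_lt_mul (by nlinarith)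
    · refine .inr ⟨x % t, h₂.mem_iff.2 (mem_range'_1.2 ⟨by omega, by omega⟩), x / t, ?_,
        hdiv.symm⟩
      exact Nat.lt_of_mul_lt_mul_left (a := t) (by omega)
  · rw [pathDiffs_append, pathDiffs_append seg₁, getLast?_reverse, head?_snake_true, head?_reverse,
      head?_snake_true, pathDiffs_reverse, pathDiffs_snake, pathDiffs_snake, pathDiffs_reverse,
      length_reverse, h₁.length_eq, h₂.length_eq, length_range, length_range',
      show t * q + s = s * (q + 1) + (t - s) * q by zify [hst]; ring, Multiset.replicate_add]
    abel

theorem stmt9_general (t a b c : ℕ)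
    (ha : 2 ≤ a) (hab : a + b = t - 1) :
    ∃ l : List ℕ,
      IsLinReal (Multiset.replicate a 1 + Multiset.replicate b 2 +
        Multiset.replicate c t) l := by
  have hst : c % t < t := Nat.mod_lt c (by omega)
  obtain ⟨seg₁, seg₂, h₁, h₂, hdiffs⟩ := exists_split_path (b := b) ha (by omega) hst
  obtain ⟨L, hperm, hL⟩ := exists_perm_pathDiffs_of_split (c / t) hst.le h₁ h₂
  have hdiv := Nat.div_add_mod c t
  refine ⟨L, ?_, ?_⟩
  · rwa [Multiset.card_add, Multiset.card_add, Multiset.card_replicate, Multiset.card_replicate,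
      Multiset.card_replicate, show a + b + c + 1 = t * (c / t + 1) + c % t by rw [mul_add]; omega]
  · rw [hL, hdiffs, hdiv, add_comm]

theorem stmt9 (t a b c : ℕ) (ht : Even t) (h4 : 4 ≤ t)
    (ha : 2 ≤ a) (hb : 1 ≤ b) (hc : 1 ≤ c) (hab : a + b = t - 1) :
    ∃ l : List ℕ,
      IsLinReal (Multiset.replicate a 1 + Multiset.replicate b 2 +
        Multiset.replicate c t) l :=
  stmt9_general t a b c ha hab
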